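/- arXiv:2108.12851 — 2 statements merged into one kernel-verified Lean document; each statement's English description precedes it below -/
import Mathlib

section
/- Let h : ℝ → ℝ be thrice differentiable with h', h'', h''' ∈ L¹(ℝ) and vanishing at infinity, and ĥ' ∈ L¹(ℝ). Then C_h := (1/√(2π)) ∫_ℝ |ĥ'(ω)| dω ≤ (2√2/√π) · (1 + log( √(‖h'‖₁ ‖h'''‖₁) / ‖h''‖₁ )) · ‖h''‖₁. -/
/-!
Since `ĥ''(ω) = iω ĥ'(ω)` and `ĥ'''(ω) = (iω)² ĥ'(ω)`, while `|ĝ| ≤ ‖g‖₁ / √(2π)` for every `g`,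
the function `√(2π) |ĥ'(ω)|` is bounded by `‖h'‖₁`, `‖h''‖₁ / |ω|` and `‖h'''‖₁ / ω²`.
Using each bound on its own range `|ω| ≤ a`, `a < |ω| ≤ b`, `b < |ω|` gives
`∫ √(2π) |ĥ'| ≤ 2 (a ‖h'‖₁ + ‖h''‖₁ log (b / a) + ‖h'''‖₁ / b)`.
When `λ₁ = ‖h''‖₁ / ‖h'‖₁ ≤ λ₂ = ‖h'''‖₁ / ‖h''‖₁`, the choice `a = λ₁`, `b = λ₂` gives the claim
with the better constant `2 / π`. Otherwise take `a = b = √(‖h'''‖₁ / ‖h'‖₁)`; then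
`t = √(‖h'‖₁ ‖h'''‖₁) / ‖h''‖₁ < 1`, and the `L¹` Landau inequality
`‖h''‖₁² ≤ 4 ‖h'‖₁ ‖h'''‖₁` gives `t ≥ 1 / 2`, where `t ≤ √(2π) (1 + log t)` still holds.
The Landau inequality follows by integrating the Taylor formula
`a h''(x) = h'(x) - h'(x - a) + ∫₀ᵃ (a - t) h'''(x - t) dt` in `x` and optimizing over `a`.
-/

open MeasureTheory

/-- Fourier transform with the symmetric `1/√(2π)` normalization. -/
noncomputable def FT (g : ℝ → ℝ) (ω : ℝ) : ℂ :=
  (Real.sqrt (2 * Real.pi) : ℂ)⁻¹ * ∫ x : ℝ, (g x : ℂ) * Complex.exp (-(Complex.I * ω * x))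

open Set

section FourierTransform

variable {g g' : ℝ → ℝ}

lemma norm_exp_neg_I_mul (ω x : ℝ) : ‖Complex.exp (-(Complex.I * ω * x))‖ = 1 := by
  rw [Complex.norm_exp]
  simp [Complex.mul_re]

lemma integrable_ofReal_mul_exp_neg_I_mul (hg : Integrable g) (ω : ℝ) :
    Integrable (fun x => (g x : ℂ) * Complex.exp (-(Complex.I * ω * x))) :=
  hg.ofReal.mul_bdd (by fun_prop) (c := 1) (ae_of_all _ fun x => (norm_exp_neg_I_mul ω x).le)

lemma sqrt_two_pi_mul_norm_FT_le (g : ℝ → ℝ) (ω : ℝ) :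
    Real.sqrt (2 * Real.pi) * ‖FT g ω‖ ≤ ∫ x, |g x| := by
  have hs : 0 < Real.sqrt (2 * Real.pi) := by positivity
  rw [FT, norm_mul, norm_inv, Complex.norm_real, Real.norm_of_nonneg hs.le,
    mul_inv_cancel_left₀ hs.ne']
  refine (norm_integral_le_integral_norm _).trans_eq (integral_congr_ae (ae_of_all _ fun x => ?_))
  simp only [norm_mul, norm_exp_neg_I_mul, mul_one, Complex.norm_real, Real.norm_eq_abs]

lemma FT_of_hasDerivAt (hd : ∀ x, HasDerivAt g (g' x) x) (hg : Integrable g)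
    (hg' : Integrable g') (ω : ℝ) :
    FT g' ω = Complex.I * ω * FT g ω := by
  set e : ℝ → ℂ := fun x => Complex.exp (-(Complex.I * ω * x))
  have he : ∀ x, HasDerivAt e (e x * -(Complex.I * ω)) x := fun x => by
    simpa using (((hasDerivAt_id (x : ℂ)).const_mul (Complex.I * ω)).neg.cexp).comp_ofReal
  have hibp := integral_mul_deriv_eq_deriv_mul_of_integrable (u := fun x => (g x : ℂ))
    (fun x _ => (hd x).ofReal_comp) (fun x _ => he x)
    (((integrable_ofReal_mul_exp_neg_I_mul hg ω).mul_const (-(Complex.I * ω))).congr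
      (ae_of_all _ fun x => by simp only [Pi.mul_apply, e]; ring))
    (integrable_ofReal_mul_exp_neg_I_mul hg' ω) (integrable_ofReal_mul_exp_neg_I_mul hg ω)
  simp only [← mul_assoc, integral_mul_const] at hibp
  simp only [FT]
  linear_combination (Real.sqrt (2 * Real.pi) : ℂ)⁻¹ * hibp

lemma norm_FT_of_hasDerivAt (hd : ∀ x, HasDerivAt g (g' x) x) (hg : Integrable g)
    (hg' : Integrable g') (ω : ℝ) :
    ‖FT g' ω‖ = |ω| * ‖FT g ω‖ := by
  rw [FT_of_hasDerivAt hd hg hg', norm_mul, norm_mul, Complex.norm_I, one_mul, Complex.norm_real,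
    Real.norm_eq_abs]

lemma abs_mul_sqrt_two_pi_mul_norm_FT_le (hd : ∀ x, HasDerivAt g (g' x) x) (hg : Integrable g)
    (hg' : Integrable g') (ω : ℝ) :
    |ω| * (Real.sqrt (2 * Real.pi) * ‖FT g ω‖) ≤ ∫ x, |g' x| := by
  rw [mul_left_comm, ← norm_FT_of_hasDerivAt hd hg hg']
  exact sqrt_two_pi_mul_norm_FT_le g' ω

lemma sq_mul_sqrt_two_pi_mul_norm_FT_le {g'' : ℝ → ℝ} (hd : ∀ x, HasDerivAt g (g' x) x)
    (hd' : ∀ x, HasDerivAt g' (g'' x) x) (hg : Integrable g) (hg' : Integrable g')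
    (hg'' : Integrable g'') (ω : ℝ) :
    ω ^ 2 * (Real.sqrt (2 * Real.pi) * ‖FT g ω‖) ≤ ∫ x, |g'' x| := by
  calc ω ^ 2 * (Real.sqrt (2 * Real.pi) * ‖FT g ω‖)
      = |ω| * (Real.sqrt (2 * Real.pi) * ‖FT g' ω‖) := by
        rw [norm_FT_of_hasDerivAt hd hg hg', ← sq_abs]
        ring
    _ ≤ ∫ x, |g'' x| := abs_mul_sqrt_two_pi_mul_norm_FT_le hd' hg' hg'' ω

end FourierTransform

section Landau

open scoped Convolution

variable {f f' f'' : ℝ → ℝ}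

lemma mul_deriv_eq_sub_add_intervalIntegral (hf : ∀ x, HasDerivAt f (f' x) x)
    (hf' : ∀ x, HasDerivAt f' (f'' x) x) (hf'' : Integrable f'') (x a : ℝ) :
    a * f' x = f x - f (x - a) + ∫ t in 0..a, (a - t) * f'' (x - t) := by
  have hG : ∀ t ∈ uIcc 0 a, HasDerivAt (fun t => f (x - t) - (a - t) * f' (x - t))
      ((a - t) * f'' (x - t)) t := fun t _ => by
    have hsub : HasDerivAt (fun t : ℝ => x - t) (-1) t := by
      simpa using (hasDerivAt_id t).const_sub x
    refine (((hf (x - t)).comp t hsub).sub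
      (((hasDerivAt_id t).const_sub a).mul ((hf' (x - t)).comp t hsub))).congr_deriv ?_
    simp only [Function.comp_apply, id]
    ring
  have hint : IntervalIntegrable (fun t => (a - t) * f'' (x - t)) volume 0 a :=
    (hf''.comp_sub_left x).intervalIntegrable.continuousOn_mul (by fun_prop)
  rw [intervalIntegral.integral_eq_sub_of_hasDerivAt hG hint]
  simp

lemma mul_abs_deriv_le_add_convolution (hf : ∀ x, HasDerivAt f (f' x) x)
    (hf' : ∀ x, HasDerivAt f' (f'' x) x) (hf'' : Integrable f'') {a : ℝ} (ha : 0 ≤ a) (x : ℝ) :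
    a * |f' x| ≤ |f x| + |f (x - a)| +
      ((Ioc 0 a).indicator (fun t => a - t) ⋆ fun y => |f'' y|) x := by
  have hrem : |∫ t in 0..a, (a - t) * f'' (x - t)| ≤
      ((Ioc 0 a).indicator (fun t => a - t) ⋆ fun y => |f'' y|) x := by
    calc |∫ t in 0..a, (a - t) * f'' (x - t)|
        ≤ ∫ t in Ioc 0 a, (a - t) * |f'' (x - t)| := by
          rw [intervalIntegral.integral_of_le ha]
          refine abs_integral_le_integral_abs.trans_eq
            (setIntegral_congr_fun measurableSet_Ioc fun t ht => ?_)
          rw [abs_mul, abs_of_nonneg (sub_nonneg.2 ht.2)]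
      _ = _ := by
          rw [convolution_lsmul, ← integral_indicator measurableSet_Ioc]
          simp only [indicator_mul_left, smul_eq_mul]
  rw [show a * |f' x| = |a * f' x| by rw [abs_mul, abs_of_nonneg ha],
    mul_deriv_eq_sub_add_intervalIntegral hf hf' hf'' x a]
  calc |f x - f (x - a) + ∫ t in 0..a, (a - t) * f'' (x - t)|
      ≤ |f x - f (x - a)| + |∫ t in 0..a, (a - t) * f'' (x - t)| := abs_add_le _ _
    _ ≤ _ := by gcongr; exact abs_sub _ _

lemma integral_indicator_Ioc_sub {a : ℝ} (ha : 0 ≤ a) :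
    ∫ t, (Ioc 0 a).indicator (fun t => a - t) t = a ^ 2 / 2 := by
  rw [integral_indicator measurableSet_Ioc, ← intervalIntegral.integral_of_le ha,
    intervalIntegral.integral_sub intervalIntegrable_const intervalIntegral.intervalIntegrable_id,
    intervalIntegral.integral_const, integral_id, smul_eq_mul]
  ring

lemma mul_integral_abs_deriv_le (hf : ∀ x, HasDerivAt f (f' x) x)
    (hf' : ∀ x, HasDerivAt f' (f'' x) x) (hfi : Integrable f) (hf'' : Integrable f'')
    {a : ℝ} (ha : 0 ≤ a) :
    a * ∫ x, |f' x| ≤ 2 * (∫ x, |f x|) + a ^ 2 / 2 * ∫ x, |f'' x| := by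
  have hK : Integrable ((Ioc 0 a).indicator fun t => a - t) :=
    (continuous_const.sub continuous_id).integrableOn_Ioc.integrable_indicator measurableSet_Ioc
  have hconv := hK.integrable_convolution (ContinuousLinearMap.lsmul ℝ ℝ) hf''.abs
  have hshift : Integrable fun x => |f (x - a)| := (hfi.comp_sub_right a).abs
  have hsum : Integrable fun x => |f x| + |f (x - a)| := hfi.abs.add hshift
  calc a * ∫ x, |f' x| = ∫ x, a * |f' x| := (integral_const_mul a _).symm
    _ ≤ ∫ x, (|f x| + |f (x - a)| +
          ((Ioc 0 a).indicator (fun t => a - t) ⋆ fun y => |f'' y|) x) :=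
        integral_mono_of_nonneg (ae_of_all _ fun x => by positivity)
          (hsum.add hconv)
          (ae_of_all _ (mul_abs_deriv_le_add_convolution hf hf' hf'' ha))
    _ = 2 * (∫ x, |f x|) + a ^ 2 / 2 * ∫ x, |f'' x| := by
        rw [integral_add hsum hconv, integral_add hfi.abs hshift,
          integral_sub_right_eq_self (fun x => |f x|), integral_convolution _ hK hf''.abs,
          integral_indicator_Ioc_sub ha]
        simp only [ContinuousLinearMap.lsmul_apply, smul_eq_mul]
        ring

lemma sq_le_four_mul_of_forall_mul_le {A B C : ℝ} (hA : 0 ≤ A) (hB : 0 ≤ B) (hC : 0 ≤ C)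
    (h : ∀ a, 0 < a → a * B ≤ 2 * A + a ^ 2 / 2 * C) :
    B ^ 2 ≤ 4 * (A * C) := by
  have hquad : ∀ a : ℝ, 0 ≤ C / 2 * (a * a) + -B * a + 2 * A := fun a => by
    rcases lt_or_ge 0 a with ha | ha
    · nlinarith [h a ha]
    · nlinarith [mul_nonneg hB (neg_nonneg.2 ha), mul_nonneg hC (mul_self_nonneg a)]
  have := discrim_le_zero hquad
  rw [discrim] at this
  linarith

theorem sq_integral_abs_deriv_le (hf : ∀ x, HasDerivAt f (f' x) x)
    (hf' : ∀ x, HasDerivAt f' (f'' x) x) (hfi : Integrable f) (hf'' : Integrable f'') :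
    (∫ x, |f' x|) ^ 2 ≤ 4 * ((∫ x, |f x|) * ∫ x, |f'' x|) :=
  sq_le_four_mul_of_forall_mul_le (integral_nonneg fun _ => abs_nonneg _)
    (integral_nonneg fun _ => abs_nonneg _) (integral_nonneg fun _ => abs_nonneg _)
    fun _ ha => mul_integral_abs_deriv_le hf hf' hfi hf'' ha.le

end Landau

/-- The bound on `I = ∫ F` obtained from `F ≤ A` on `|ω| ≤ a`, `F ≤ B / |ω|` on `a < |ω| ≤ b`
and `F ≤ C / ω²` on `b < |ω|`, for all admissible cut-offs `a ≤ b`. -/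
def ThreeRegimeBound (I A B C : ℝ) : Prop :=
  ∀ a b, 0 < a → a ≤ b → I ≤ 2 * (a * A + B * Real.log (b / a) + C / b)

section ThreeRegimes

variable {F : ℝ → ℝ} {A B C a b : ℝ}

lemma setIntegral_Ioc_zero_le_mul (hF : IntegrableOn F (Ioc 0 a)) (hA : ∀ ω ∈ Ioc 0 a, F ω ≤ A)
    (ha : 0 ≤ a) :
    ∫ ω in Ioc 0 a, F ω ≤ a * A := by
  calc ∫ ω in Ioc 0 a, F ω ≤ ∫ _ in Ioc 0 a, A :=
        setIntegral_mono_on hF (integrableOn_const measure_Ioc_lt_top.ne) measurableSet_Ioc hA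
    _ = a * A := by simp [ha]

lemma setIntegral_Ioc_le_mul_log (hF : IntegrableOn F (Ioc a b))
    (hB : ∀ ω ∈ Ioc a b, ω * F ω ≤ B) (ha : 0 < a) (hab : a ≤ b) :
    ∫ ω in Ioc a b, F ω ≤ B * Real.log (b / a) := by
  have hinv : IntegrableOn (fun ω => B * ω⁻¹) (Ioc a b) := by
    refine (ContinuousOn.integrableOn_Icc ?_).mono_set Ioc_subset_Icc_self
    exact continuousOn_const.mul (continuousOn_inv₀.mono fun ω hω => (ha.trans_le hω.1).ne')
  calc ∫ ω in Ioc a b, F ω ≤ ∫ ω in Ioc a b, B * ω⁻¹ :=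
        setIntegral_mono_on hF hinv measurableSet_Ioc fun ω hω => by
          rw [← div_eq_mul_inv, le_div_iff₀ (ha.trans hω.1), mul_comm]
          exact hB ω hω
    _ = B * Real.log (b / a) := by
        rw [← intervalIntegral.integral_of_le hab, intervalIntegral.integral_const_mul,
          integral_inv_of_pos ha (ha.trans_le hab)]

lemma setIntegral_Ioi_le_div (hF : IntegrableOn F (Ioi b)) (hC : ∀ ω ∈ Ioi b, ω ^ 2 * F ω ≤ C)
    (hb : 0 < b) :
    ∫ ω in Ioi b, F ω ≤ C / b := by
  have hpow : ∀ ω ∈ Ioi b, ω ^ (-2 : ℝ) = (ω ^ 2)⁻¹ := fun ω hω => by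
    rw [Real.rpow_neg (hb.trans hω).le]; norm_cast
  calc ∫ ω in Ioi b, F ω ≤ ∫ ω in Ioi b, C * ω ^ (-2 : ℝ) :=
        setIntegral_mono_on hF ((integrableOn_Ioi_rpow_of_lt (by norm_num) hb).const_mul C)
          measurableSet_Ioi fun ω hω => by
            rw [hpow ω hω, ← div_eq_mul_inv, le_div_iff₀ (by nlinarith [mem_Ioi.1 hω]), mul_comm]
            exact hC ω hω
    _ = C / b := by
        rw [integral_const_mul, integral_Ioi_rpow_of_lt (by norm_num) hb]
        norm_num [Real.rpow_neg_one, div_eq_mul_inv]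

lemma setIntegral_Ioi_zero_le_of_three_regimes (hF : IntegrableOn F (Ioi 0))
    (hA : ∀ ω, F ω ≤ A) (hB : ∀ ω, |ω| * F ω ≤ B) (hC : ∀ ω, ω ^ 2 * F ω ≤ C)
    (ha : 0 < a) (hab : a ≤ b) :
    ∫ ω in Ioi 0, F ω ≤ a * A + B * Real.log (b / a) + C / b := by
  have hb := ha.trans_le hab
  have hsplit : ∫ ω in Ioi 0, F ω
      = (∫ ω in Ioc 0 a, F ω) + (∫ ω in Ioc a b, F ω) + ∫ ω in Ioi b, F ω := by
    rw [← Ioc_union_Ioi_eq_Ioi ha.le, setIntegral_union (Ioc_disjoint_Ioi le_rfl)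
      measurableSet_Ioi (hF.mono_set Ioc_subset_Ioi_self) (hF.mono_set (Ioi_subset_Ioi ha.le)),
      ← Ioc_union_Ioi_eq_Ioi hab, setIntegral_union (Ioc_disjoint_Ioi le_rfl) measurableSet_Ioi
      (hF.mono_set fun ω hω => ha.trans hω.1) (hF.mono_set (Ioi_subset_Ioi hb.le)), add_assoc]
  rw [hsplit]
  gcongr
  · exact setIntegral_Ioc_zero_le_mul (hF.mono_set Ioc_subset_Ioi_self) (fun ω _ => hA ω) ha.le
  · refine setIntegral_Ioc_le_mul_log (hF.mono_set fun ω hω => ha.trans hω.1)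
      (fun ω hω => ?_) ha hab
    simpa only [abs_of_pos (ha.trans hω.1)] using hB ω
  · exact setIntegral_Ioi_le_div (hF.mono_set (Ioi_subset_Ioi hb.le)) (fun ω _ => hC ω) hb

lemma threeRegimeBound_integral (hF : Integrable F)
    (hA : ∀ ω, F ω ≤ A) (hB : ∀ ω, |ω| * F ω ≤ B) (hC : ∀ ω, ω ^ 2 * F ω ≤ C) :
    ThreeRegimeBound (∫ ω, F ω) A B C := by
  intro a b ha hab
  have hright := setIntegral_Ioi_zero_le_of_three_regimes hF.integrableOn hA hB hC ha hab
  have hleft := setIntegral_Ioi_zero_le_of_three_regimes hF.comp_neg.integrableOn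
    (fun ω => hA (-ω)) (fun ω => by simpa only [abs_neg] using hB (-ω))
    (fun ω => by simpa only [neg_sq] using hC (-ω)) ha hab
  rw [integral_comp_neg_Ioi, neg_zero] at hleft
  rw [← intervalIntegral.integral_Iic_add_Ioi hF.integrableOn hF.integrableOn, two_mul]
  exact add_le_add hleft hright

lemma integral_eq_zero_of_abs_mul_nonpos (hF : ∀ ω, 0 ≤ F ω) (h : ∀ ω, |ω| * F ω ≤ 0) :
    ∫ ω, F ω = 0 :=
  integral_eq_zero_of_ae <| (volume.ae_ne 0).mono fun ω hω =>
    le_antisymm (nonpos_of_mul_nonpos_right (h ω) (abs_pos.2 hω)) (hF ω)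

end ThreeRegimes

lemma two_le_sqrt_two_pi : 2 ≤ Real.sqrt (2 * Real.pi) := by
  rw [Real.le_sqrt zero_le_two (by positivity)]
  nlinarith [Real.pi_gt_three]

lemma inv_two_pi_mul_four_mul_sqrt_two_pi :
    (2 * Real.pi)⁻¹ * (4 * Real.sqrt (2 * Real.pi)) = 2 * Real.sqrt 2 / Real.sqrt Real.pi := by
  have hπ := Real.sq_sqrt Real.pi_pos.le
  rw [Real.sqrt_mul zero_le_two]
  field_simp
  rw [hπ]
  norm_num

lemma le_sqrt_two_pi_mul_one_add_log {t : ℝ} (ht : 1 / 2 ≤ t) (ht' : t ≤ 1) :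
    t ≤ Real.sqrt (2 * Real.pi) * (1 + Real.log t) := by
  have htpos : 0 < t := by linarith
  have hlog : 1 - (2 * t)⁻¹ - Real.log 2 ≤ Real.log t := by
    have := Real.one_sub_inv_le_log_of_pos (by positivity : 0 < 2 * t)
    rw [Real.log_mul two_ne_zero htpos.ne'] at this
    linarith
  have hinv : (2 * t)⁻¹ ≤ 5 / 4 - t / 2 := by
    rw [inv_eq_one_div, div_le_iff₀ (by positivity)]
    nlinarith
  have hlog2 := Real.log_two_lt_d9
  calc t ≤ 2 * (1 + Real.log t) := by linarith
    _ ≤ Real.sqrt (2 * Real.pi) * (1 + Real.log t) :=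
        mul_le_mul_of_nonneg_right two_le_sqrt_two_pi (by linarith)

namespace ThreeRegimeBound

variable {I A B C : ℝ}

lemma le_four_mul_sqrt (h : ThreeRegimeBound I A B C) (hA : 0 < A) (hC : 0 < C) :
    I ≤ 4 * Real.sqrt (A * C) := by
  have hsq : Real.sqrt (A * C) ^ 2 = A * C := Real.sq_sqrt (by positivity)
  have hpos : 0 < Real.sqrt (A * C) := by positivity
  have hCa : C / (Real.sqrt (A * C) / A) = Real.sqrt (A * C) := by
    rw [div_div_eq_mul_div, div_eq_iff hpos.ne', ← sq, hsq, mul_comm]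
  have := h (Real.sqrt (A * C) / A) (Real.sqrt (A * C) / A) (by positivity) le_rfl
  rw [div_self (by positivity), Real.log_one, mul_zero, add_zero, div_mul_cancel₀ _ hA.ne', hCa]
    at this
  linarith

lemma le_four_mul_one_add_log (h : ThreeRegimeBound I A B C) (hA : 0 < A) (hC : 0 < C)
    (hB : 0 < B) (hBAC : B ^ 2 ≤ A * C) :
    I ≤ 4 * (1 + Real.log (Real.sqrt (A * C) / B)) * B := by
  have hlog : Real.log ((C / B) / (B / A)) = 2 * Real.log (Real.sqrt (A * C) / B) := by
    have hsq : (C / B) / (B / A) = (Real.sqrt (A * C) / B) ^ 2 := by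
      rw [div_pow, Real.sq_sqrt (by positivity)]
      field_simp
    rw [hsq, Real.log_pow]
    norm_num
  have := h (B / A) (C / B) (by positivity) (by rw [div_le_div_iff₀ hA hB]; nlinarith)
  rw [hlog, div_mul_cancel₀ _ hA.ne', div_div_eq_mul_div, mul_div_cancel_left₀ _ hC.ne'] at this
  linarith

lemma le_of_sq_le_four_mul (h : ThreeRegimeBound I A B C) (hA : 0 ≤ A) (hC : 0 ≤ C)
    (hB : 0 < B) (hBAC : B ^ 2 ≤ 4 * (A * C)) :
    I ≤ 4 * Real.sqrt (2 * Real.pi) * (1 + Real.log (Real.sqrt (A * C) / B)) * B := by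
  have hAC : 0 < A * C := by nlinarith
  have hApos : 0 < A := lt_of_le_of_ne hA (by rintro rfl; simp at hAC)
  have hCpos : 0 < C := lt_of_le_of_ne hC (by rintro rfl; simp at hAC)
  set t := Real.sqrt (A * C) / B with ht
  rcases le_or_gt (B ^ 2) (A * C) with hle | hlt
  · have hlog : 0 ≤ Real.log t :=
      Real.log_nonneg ((one_le_div hB).2 (Real.le_sqrt_of_sq_le hle))
    calc I ≤ 4 * (1 + Real.log t) * B := h.le_four_mul_one_add_log hApos hCpos hB hle
      _ ≤ 4 * Real.sqrt (2 * Real.pi) * (1 + Real.log t) * B := by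
        have := two_le_sqrt_two_pi
        gcongr
        linarith
  · have hsq : Real.sqrt (A * C) ^ 2 = A * C := Real.sq_sqrt hAC.le
    have hpos : 0 < Real.sqrt (A * C) := Real.sqrt_pos.2 hAC
    have ht1 : t ≤ 1 := by
      rw [ht, div_le_one hB, Real.sqrt_le_left hB.le]
      exact hlt.le
    have ht2 : 1 / 2 ≤ t := by
      rw [ht, le_div_iff₀ hB]
      nlinarith
    calc I ≤ 4 * t * B := by
          rw [ht, mul_assoc, div_mul_cancel₀ _ hB.ne']
          exact h.le_four_mul_sqrt hApos hCpos
      _ ≤ 4 * (Real.sqrt (2 * Real.pi) * (1 + Real.log t)) * B := by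
        gcongr
        exact le_sqrt_two_pi_mul_one_add_log ht2 ht1
      _ = _ := by ring

end ThreeRegimeBound

theorem barron_constant_bound_general
    (h₁ h₂ h₃ : ℝ → ℝ)
    (hd2 : ∀ x, HasDerivAt h₁ (h₂ x) x)
    (hd3 : ∀ x, HasDerivAt h₂ (h₃ x) x)
    (hi1 : Integrable h₁) (hi2 : Integrable h₂) (hi3 : Integrable h₃)
    (hFT : Integrable (fun ω => ‖FT h₁ ω‖)) :
    (Real.sqrt (2 * Real.pi))⁻¹ * ∫ ω : ℝ, ‖FT h₁ ω‖ ≤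
      (2 * Real.sqrt 2 / Real.sqrt Real.pi) *
        (1 + Real.log (Real.sqrt ((∫ x, |h₁ x|) * (∫ x, |h₃ x|)) / (∫ x, |h₂ x|))) *
        (∫ x, |h₂ x|) := by
  have hGB := abs_mul_sqrt_two_pi_mul_norm_FT_le hd2 hi1 hi2
  have hLHS : (Real.sqrt (2 * Real.pi))⁻¹ * ∫ ω, ‖FT h₁ ω‖
      = (2 * Real.pi)⁻¹ * ∫ ω, Real.sqrt (2 * Real.pi) * ‖FT h₁ ω‖ := by
    rw [integral_const_mul, ← mul_assoc, inv_mul_eq_div (2 * Real.pi), Real.sqrt_div_self]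
  rw [hLHS]
  rcases (integral_nonneg (fun x => abs_nonneg (h₂ x)) : 0 ≤ ∫ x, |h₂ x|).eq_or_lt with hB | hB
  · rw [integral_eq_zero_of_abs_mul_nonpos (fun ω => by positivity) (fun ω => hB ▸ hGB ω), ← hB]
    simp
  · have hI := (threeRegimeBound_integral (hFT.const_mul _) (sqrt_two_pi_mul_norm_FT_le h₁) hGB
      (sq_mul_sqrt_two_pi_mul_norm_FT_le hd2 hd3 hi1 hi2 hi3)).le_of_sq_le_four_mul
      (integral_nonneg fun x => abs_nonneg _) (integral_nonneg fun x => abs_nonneg _) hB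
      (sq_integral_abs_deriv_le hd2 hd3 hi1 hi3)
    refine (mul_le_mul_of_nonneg_left hI (by positivity)).trans_eq ?_
    rw [← inv_two_pi_mul_four_mul_sqrt_two_pi]
    ring

/-- The Barron-constant bound in terms of the `L¹`-norms of the derivatives. -/
theorem barron_constant_bound
    (h h₁ h₂ h₃ : ℝ → ℝ)
    (hd1 : ∀ x, HasDerivAt h (h₁ x) x)
    (hd2 : ∀ x, HasDerivAt h₁ (h₂ x) x)
    (hd3 : ∀ x, HasDerivAt h₂ (h₃ x) x)
    (hi1 : Integrable h₁) (hi2 : Integrable h₂) (hi3 : Integrable h₃)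
    (hv1t : Filter.Tendsto h₁ Filter.atTop (nhds 0))
    (hv1b : Filter.Tendsto h₁ Filter.atBot (nhds 0))
    (hv2t : Filter.Tendsto h₂ Filter.atTop (nhds 0))
    (hv2b : Filter.Tendsto h₂ Filter.atBot (nhds 0))
    (hv3t : Filter.Tendsto h₃ Filter.atTop (nhds 0))
    (hv3b : Filter.Tendsto h₃ Filter.atBot (nhds 0))
    (hFT : Integrable (fun ω => ‖FT h₁ ω‖)) :
    (Real.sqrt (2 * Real.pi))⁻¹ * ∫ ω : ℝ, ‖FT h₁ ω‖ ≤
      (2 * Real.sqrt 2 / Real.sqrt Real.pi) *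
        (1 + Real.log (Real.sqrt ((∫ x, |h₁ x|) * (∫ x, |h₃ x|)) / (∫ x, |h₂ x|))) *
        (∫ x, |h₂ x|) :=
  barron_constant_bound_general h₁ h₂ h₃ hd2 hd3 hi1 hi2 hi3 hFT
end

section
/- Let g : ℝ → ℝ be a step function g(x) = Σ_{l=0}^{k} s_l · 1_{[t_l, t_{l+1})}(x) with s_l ∈ {−1, 0, +1} and −∞ = t₀ < t₁ < ⋯ < t_k < t_{k+1} = ∞. For every ε, δ > 0 there exist coefficients a_l, b_l, c_l ∈ ℝ (l = 0,…,k) such that the two-layer network h(x) = c₀ + Σ_{l=1}^k c_l φ(a_l x + b_l), with φ : ℝ → [−1,1] sigmoidal (φ(z) → ±1 as z → ±∞), satisfies |g(x) − tanh(h(x))| ≤ ε for all x outside the union of the intervals (t_l − δ, t_l + δ), l = 1,…,k. -/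
/-! The step function is `g = s₀ + ∑ₗ (sₗ₊₁ - sₗ) 𝟙[tₗ, ∞)`. At distance at least `δ` from `tₗ`,
`(φ (z (x - tₗ)) + 1) / 2` is uniformly close to `𝟙[tₗ, ∞) x` once the common slope `z` is large,
so `h = ζ (s₀ + ∑ₗ (sₗ₊₁ - sₗ) (φ (z (x - tₗ)) + 1) / 2)` is within `ε / 2` of `ζ g x`.
Since `tanh` is `1`-Lipschitz and `|s - tanh (ζ s)| ≤ 1 - tanh ζ` for `s ∈ {-1, 0, 1}`, a large
`ζ` makes `tanh h` `ε`-close to `g x`. -/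

open Filter Topology Finset

namespace Real

theorem hasDerivAt_tanh (x : ℝ) : HasDerivAt tanh (1 / cosh x ^ 2) x := by
  have h := (hasDerivAt_sinh x).div (hasDerivAt_cosh x) (cosh_pos x).ne'
  rw [← sq, ← sq, cosh_sq_sub_sinh_sq] at h
  rwa [show sinh / cosh = tanh from funext fun y => (tanh_eq_sinh_div_cosh y).symm] at h

theorem lipschitzWith_tanh : LipschitzWith 1 tanh := by
  refine lipschitzWith_of_nnnorm_deriv_le (fun x => (hasDerivAt_tanh x).differentiableAt)
    fun x => ?_
  rw [(hasDerivAt_tanh x).deriv, ← NNReal.coe_le_coe, coe_nnnorm, norm_eq_abs,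
    abs_of_pos (by positivity), NNReal.coe_one, div_le_one (by positivity)]
  nlinarith [one_le_cosh x]

theorem one_sub_tanh_le_exp_neg (x : ℝ) : 1 - tanh x ≤ exp (-x) := by
  have hcosh : 1 - tanh x = exp (-x) / cosh x := by
    rw [tanh_eq_sinh_div_cosh, ← cosh_sub_sinh, sub_div, div_self (cosh_pos x).ne']
  rw [hcosh]
  exact div_le_self (exp_pos _).le (one_le_cosh x)

theorem tendsto_tanh_atTop : Tendsto tanh atTop (𝓝 1) := by
  have h := (tendsto_exp_neg_atTop_nhds_zero).const_sub (1 : ℝ)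
  rw [sub_zero] at h
  exact tendsto_of_tendsto_of_tendsto_of_le_of_le h tendsto_const_nhds
    (fun x => by linarith [one_sub_tanh_le_exp_neg x]) fun x => (tanh_lt_one x).le

theorem exists_pos_one_sub_tanh_le {ε : ℝ} (hε : 0 < ε) : ∃ ζ > 0, 1 - tanh ζ ≤ ε :=
  ((eventually_gt_atTop 0).and ((tendsto_order.1 tendsto_tanh_atTop).1 (1 - ε)
    (by linarith))).exists.imp fun _ h => ⟨h.1, by linarith [h.2]⟩

theorem abs_sub_tanh_mul_le {s : ℝ} (hs : s = -1 ∨ s = 0 ∨ s = 1) (ζ : ℝ) :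
    |s - tanh (ζ * s)| ≤ 1 - tanh ζ := by
  have h := tanh_lt_one ζ
  rcases hs with rfl | rfl | rfl
  · rw [mul_neg_one, tanh_neg, abs_le]; constructor <;> linarith
  · simp only [mul_zero, tanh_zero, sub_zero, abs_zero]; linarith
  · rw [mul_one, abs_le]; constructor <;> linarith

end Real

theorem Monotone.lt_card_filter_le_iff {α : Type*} [Preorder α] [DecidableLE α] {k : ℕ}
    {t : Fin k → α} (ht : Monotone t) (x : α) (j : Fin k) : (j : ℕ) < #{i | t i ≤ x} ↔ t j ≤ x := by
  constructor
  · intro hj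
    by_contra hjx
    have hsub : filter (fun i => t i ≤ x) univ ⊆ Iio j := fun i hi => by
      rw [mem_filter] at hi
      exact mem_Iio.2 (lt_of_not_ge fun hji => hjx ((ht hji).trans hi.2))
    have := card_le_card hsub
    rw [Fin.card_Iio] at this
    omega
  · intro hjx
    have hsub : Iic j ⊆ filter (fun i => t i ≤ x) univ := fun i hi =>
      mem_filter.2 ⟨mem_univ _, (ht (mem_Iic.1 hi)).trans hjx⟩
    have := card_le_card hsub
    rw [Fin.card_Iic] at this
    omega

theorem Fin.sub_zero_eq_sum_castSucc_lt {M : Type*} [AddCommGroup M] {k : ℕ}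
    (f : Fin (k + 1) → M) (m : Fin (k + 1)) :
    f m - f 0 = ∑ l : Fin k with l.castSucc < m, (f l.succ - f l.castSucc) := by
  induction m using Fin.inductionOn with
  | zero => simp
  | succ i ih =>
    have hfilter : filter (fun l : Fin k => l.castSucc < i.succ) univ =
        insert i (filter (fun l : Fin k => l.castSucc < i.castSucc) univ) := by
      ext l
      simp [Fin.castSucc_lt_succ_iff, le_iff_lt_or_eq, or_comm]
    rw [hfilter, sum_insert (by simp), ← ih]
    abel

theorem exists_eq_and_forall_le_iff_castSucc_lt {α β : Type*} [Preorder α] [DecidableLE α]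
    {k : ℕ} {s : Fin (k + 1) → β} {t : Fin k → α} (ht : Monotone t) {g : α → β}
    (hg : ∀ (x : α) (l : Fin (k + 1)), (∀ j : Fin k, ((j : ℕ) < (l : ℕ) ↔ t j ≤ x)) → g x = s l)
    (x : α) :
    ∃ m : Fin (k + 1), g x = s m ∧ ∀ j, t j ≤ x ↔ j.castSucc < m := by
  have hle : #{i | t i ≤ x} < k + 1 :=
    Nat.lt_succ_of_le ((card_le_univ _).trans_eq (Fintype.card_fin k))
  refine ⟨⟨_, hle⟩, hg x _ fun j => ht.lt_card_filter_le_iff x j, fun j => ?_⟩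
  rw [← ht.lt_card_filter_le_iff x j, Fin.lt_def, Fin.val_castSucc]

theorem add_sum_sub_mul_indicator_Ici {α M : Type*} [Preorder α] [Ring M] {k : ℕ}
    (s : Fin (k + 1) → M) (t : Fin k → α) {x : α} {m : Fin (k + 1)}
    (hm : ∀ j, t j ≤ x ↔ j.castSucc < m) :
    s 0 + ∑ l, (s l.succ - s l.castSucc) * (Set.Ici (t l)).indicator 1 x = s m := by
  rw [← eq_sub_iff_add_eq', Fin.sub_zero_eq_sum_castSucc_lt, sum_filter]
  refine sum_congr rfl fun l _ => ?_
  by_cases h : l.castSucc < m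
  · rw [if_pos h, Set.indicator_of_mem (Set.mem_Ici.2 ((hm l).2 h)), Pi.one_apply, mul_one]
  · rw [if_neg h, Set.indicator_of_notMem (mt Set.mem_Ici.1 (mt (hm l).1 h)), mul_zero]

theorem exists_forall_abs_sigmoid_sub_indicator_Ici_le {φ : ℝ → ℝ}
    (hφt : Tendsto φ atTop (𝓝 1)) (hφb : Tendsto φ atBot (𝓝 (-1))) {η δ : ℝ} (hη : 0 < η)
    (hδ : 0 < δ) :
    ∃ z : ℝ, ∀ t x : ℝ, δ ≤ |x - t| →
      |(φ (z * (x - t)) + 1) / 2 - (Set.Ici t).indicator 1 x| ≤ η := by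
  obtain ⟨M, hM⟩ := eventually_atTop.1
    (hφt.eventually (Metric.closedBall_mem_nhds 1 (by positivity : 0 < 2 * η)))
  obtain ⟨N, hN⟩ := eventually_atBot.1
    (hφb.eventually (Metric.closedBall_mem_nhds (-1) (by positivity : 0 < 2 * η)))
  set R := max |M| |N|
  have hR : R / δ * δ = R := div_mul_cancel₀ R hδ.ne'
  have hz : 0 ≤ R / δ := by positivity
  refine ⟨R / δ, fun t x hx => ?_⟩
  by_cases htx : t ≤ x
  · have hxt : δ ≤ x - t := by rwa [abs_of_nonneg (sub_nonneg.2 htx)] at hx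
    have hφ := hM _ <| calc
      M ≤ R := (le_abs_self M).trans (le_max_left _ _)
      _ = R / δ * δ := hR.symm
      _ ≤ R / δ * (x - t) := mul_le_mul_of_nonneg_left hxt hz
    rw [Real.dist_eq] at hφ
    rw [Set.indicator_of_mem (Set.mem_Ici.2 htx), Pi.one_apply,
      show ∀ y : ℝ, (y + 1) / 2 - 1 = (y - 1) / 2 by intro; ring, abs_div, abs_two]
    linarith
  · have hxt : δ ≤ -(x - t) := by rwa [abs_of_neg (by linarith)] at hx
    have hφ := hN _ <| calc
      R / δ * (x - t) ≤ -R := by nlinarith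
      _ ≤ N := neg_le.1 ((neg_le_abs N).trans (le_max_right _ _))
    rw [Real.dist_eq, sub_neg_eq_add] at hφ
    rw [Set.indicator_of_notMem (by simpa using htx), sub_zero, abs_div, abs_two]
    linarith

theorem abs_sum_mul_sub_sum_mul_le {ι : Type*} (s : Finset ι) (d u v : ι → ℝ) {η : ℝ}
    (h : ∀ i ∈ s, |u i - v i| ≤ η) :
    |∑ i ∈ s, d i * u i - ∑ i ∈ s, d i * v i| ≤ η * ∑ i ∈ s, |d i| := by
  rw [← sum_sub_distrib, mul_sum]
  refine (abs_sum_le_sum_abs _ _).trans (sum_le_sum fun i hi => ?_)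
  rw [← mul_sub, abs_mul, mul_comm]
  exact mul_le_mul_of_nonneg_right (h i hi) (abs_nonneg _)

theorem exists_forall_abs_sum_indicator_Ici_sub_sum_sigmoid_le {ι : Type*} [Fintype ι]
    {φ : ℝ → ℝ} (hφt : Tendsto φ atTop (𝓝 1)) (hφb : Tendsto φ atBot (𝓝 (-1)))
    (d t : ι → ℝ) {η δ : ℝ} (hη : 0 < η) (hδ : 0 < δ) :
    ∃ z : ℝ, ∀ x : ℝ, (∀ j, δ ≤ |x - t j|) →
      |∑ l, d l * (Set.Ici (t l)).indicator 1 x - ∑ l, d l * ((φ (z * (x - t l)) + 1) / 2)|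
        ≤ η := by
  set D := ∑ l, |d l|
  have hD : 0 ≤ D := sum_nonneg fun l _ => abs_nonneg (d l)
  obtain ⟨z, hz⟩ := exists_forall_abs_sigmoid_sub_indicator_Ici_le hφt hφb
    (by positivity : 0 < η / (D + 1)) hδ
  refine ⟨z, fun x hx =>
    (abs_sum_mul_sub_sum_mul_le (η := η / (D + 1)) _ _ _ _ fun l _ => ?_).trans ?_⟩
  · rw [abs_sub_comm]
    exact hz _ _ (hx l)
  · rw [div_mul_eq_mul_div, div_le_iff₀ (by positivity)]
    nlinarith

theorem step_function_approx_general (k : ℕ)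
    (s : Fin (k+1) → ℝ) (hs : ∀ l, s l = -1 ∨ s l = 0 ∨ s l = 1)
    (t : Fin k → ℝ) (ht : StrictMono t)
    (g : ℝ → ℝ)
    (hg : ∀ x : ℝ, ∀ l : Fin (k+1),
      (∀ j : Fin k, ((j : ℕ) < (l : ℕ) ↔ t j ≤ x)) → g x = s l)
    (φ : ℝ → ℝ)
    (hφt : Filter.Tendsto φ Filter.atTop (nhds 1))
    (hφb : Filter.Tendsto φ Filter.atBot (nhds (-1)))
    (ε δ : ℝ) (hε : 0 < ε) (hδ : 0 < δ) :
    ∃ (c₀ : ℝ) (a b c : Fin k → ℝ), ∀ x : ℝ,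
      (∀ j : Fin k, δ ≤ |x - t j|) →
      |g x - Real.tanh (c₀ + ∑ l, c l * φ (a l * x + b l))| ≤ ε := by
  set d : Fin k → ℝ := fun l => s l.succ - s l.castSucc
  obtain ⟨ζ, hζ, hζε⟩ := Real.exists_pos_one_sub_tanh_le (half_pos hε)
  obtain ⟨z, hz⟩ := exists_forall_abs_sum_indicator_Ici_sub_sum_sigmoid_le hφt hφb d t
    (by positivity : 0 < ε / 2 / ζ) hδ
  refine ⟨ζ * (s 0 + ∑ l, d l / 2), fun _ => z, fun l => -(z * t l), fun l => ζ * (d l / 2),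
    fun x hx => ?_⟩
  set h := ζ * (s 0 + ∑ l, d l * ((φ (z * (x - t l)) + 1) / 2)) with hh
  have hnet : ζ * (s 0 + ∑ l, d l / 2) + ∑ l, ζ * (d l / 2) * φ (z * x + -(z * t l)) = h := by
    rw [hh, mul_add, mul_add, add_assoc, mul_sum, mul_sum, ← sum_add_distrib]
    congr 1
    refine sum_congr rfl fun l _ => ?_
    rw [show z * x + -(z * t l) = z * (x - t l) by ring]
    ring
  obtain ⟨m, hgx, hm⟩ := exists_eq_and_forall_le_iff_castSucc_lt ht.monotone hg x
  have hclose : |ζ * g x - h| ≤ ε / 2 := by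
    rw [hgx, ← add_sum_sub_mul_indicator_Ici s t hm, ← mul_sub, abs_mul, abs_of_pos hζ,
      add_sub_add_left_eq_sub, ← le_div_iff₀' hζ]
    exact hz x hx
  rw [hnet]
  calc |g x - Real.tanh h| ≤ |g x - Real.tanh (ζ * g x)| + |Real.tanh (ζ * g x) - Real.tanh h| :=
        abs_sub_le _ _ _
    _ ≤ ε / 2 + ε / 2 := by
      gcongr
      · exact hgx ▸ (Real.abs_sub_tanh_mul_le (hs m) ζ).trans hζε
      · exact (Real.lipschitzWith_tanh.dist_le_mul _ _).trans
          (by simpa [Real.dist_eq] using hclose)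
    _ = ε := add_halves ε

/-- A `{−1,0,+1}`-valued step function with `k` thresholds can be uniformly
approximated, away from its thresholds, by `tanh` of a two-layer neural
network of size `k`. -/
theorem step_function_approx (k : ℕ)
    (s : Fin (k+1) → ℝ) (hs : ∀ l, s l = -1 ∨ s l = 0 ∨ s l = 1)
    (t : Fin k → ℝ) (ht : StrictMono t)
    (g : ℝ → ℝ)
    (hg : ∀ x : ℝ, ∀ l : Fin (k+1),
      (∀ j : Fin k, ((j : ℕ) < (l : ℕ) ↔ t j ≤ x)) → g x = s l)
    (φ : ℝ → ℝ) (hφr : ∀ z, φ z ∈ Set.Icc (-1:ℝ) 1)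
    (hφt : Filter.Tendsto φ Filter.atTop (nhds 1))
    (hφb : Filter.Tendsto φ Filter.atBot (nhds (-1)))
    (ε δ : ℝ) (hε : 0 < ε) (hδ : 0 < δ) :
    ∃ (c₀ : ℝ) (a b c : Fin k → ℝ), ∀ x : ℝ,
      (∀ j : Fin k, δ ≤ |x - t j|) →
      |g x - Real.tanh (c₀ + ∑ l, c l * φ (a l * x + b l))| ≤ ε :=
  step_function_approx_general k s hs t ht g hg φ hφt hφb ε δ hε hδ
end
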